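/- For any register protocol with initial location q0 and initial register value d0, the set Post*(↑{⟨q0, d0⟩}) of configurations reachable from the upward closure of {⟨q0, d0⟩} (equivalently, reachable from some initial configuration ⟨q0^k, d0⟩ with k ≥ 1) is upward-closed with respect to the order ⪯. -/

import Mathlib

/-! Copycat argument. Along a run `γ₀ →* γ`, every process that ends in a location `q'` descends
from some process of `γ₀`; an extra copy of that ancestor, started in `γ₀`, can imitate it,
repeating each of its transitions immediately afterwards (a read then sees the datum just read, a
write rewrites the datum just written), and end in `q'` as well. Adding such copies to `γ₀` keeps
its support and register, so it stays in the upward closure of the initial configurations. -/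

/-- Operation type of a register protocol: read or write. -/
inductive Op : Type
  | R : Op
  | W : Op
deriving DecidableEq

instance : Fintype Op :=
  ⟨{Op.R, Op.W}, fun x => by cases x <;> simp⟩

/-- A location has at least one outgoing transition. -/
def Nonblock {Q D : Type*} (T : Set (Q × Op × D × Q)) : Prop :=
  ∀ q : Q, ∃ op d q', (q, op, d, q') ∈ T

/-- Whenever a read transition exists from `q`, reads of every datum are enabled in `q`. -/
def ReadTotal {Q D : Type*} (T : Set (Q × Op × D × Q)) : Prop :=
  ∀ q d' q', (q, Op.R, d', q') ∈ T → ∀ d : D, ∃ qd, (q, Op.R, d, qd) ∈ T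

/-- One step of the distributed system associated with transition set `T`:
a configuration is a pair of a finite multiset of locations and a register datum. -/
def IsStep {Q D : Type*} [DecidableEq Q] (T : Set (Q × Op × D × Q)) :
    Multiset Q × D → Multiset Q × D → Prop := fun γ γ' =>
  ∃ q op d'' q', (q, op, d'', q') ∈ T ∧ q ∈ γ.1 ∧
    γ'.1 = γ.1 - {q} + {q'} ∧
    ((op = Op.R ∧ γ.2 = d'' ∧ γ'.2 = d'') ∨ (op = Op.W ∧ γ'.2 = d''))

/-- Reachability: reflexive-transitive closure of the step relation. -/
def Reach {Q D : Type*} [DecidableEq Q] (T : Set (Q × Op × D × Q)) :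
    Multiset Q × D → Multiset Q × D → Prop :=
  Relation.ReflTransGen (IsStep T)

/-- `PostStar T S` is the set of configurations reachable from some configuration of `S`. -/
def PostStar {Q D : Type*} [DecidableEq Q] (T : Set (Q × Op × D × Q))
    (S : Set (Multiset Q × D)) : Set (Multiset Q × D) :=
  {γ' | ∃ γ ∈ S, Reach T γ γ'}

/-- `PreStar T S` is the set of configurations from which some configuration of `S`
is reachable. -/
def PreStar {Q D : Type*} [DecidableEq Q] (T : Set (Q × Op × D × Q))
    (S : Set (Multiset Q × D)) : Set (Multiset Q × D) :=
  {γ | ∃ γ' ∈ S, Reach T γ γ'}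

/-- `[qf]`: configurations containing at least one process in location `qf`. -/
def TargetSet {Q D : Type*} [DecidableEq Q] (qf : Q) : Set (Multiset Q × D) :=
  {γ | 0 < γ.1.count qf}

/-- The order `⪯` on configurations: same register content, same support,
and componentwise smaller multiset. -/
def ConfLE {Q D : Type*} [DecidableEq Q] (γ γ' : Multiset Q × D) : Prop :=
  γ.2 = γ'.2 ∧ γ.1.toFinset = γ'.1.toFinset ∧ γ.1 ≤ γ'.1

/-- Upward closure of a set of configurations with respect to `⪯`. -/
def UpSet {Q D : Type*} [DecidableEq Q] (B : Set (Multiset Q × D)) :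
    Set (Multiset Q × D) :=
  {γ' | ∃ γ ∈ B, ConfLE γ γ'}

section Copycat

variable {Q D : Type*} [DecidableEq Q] {T : Set (Q × Op × D × Q)}

theorem ConfLE.trans {γ₁ γ₂ γ₃ : Multiset Q × D} (h₁₂ : ConfLE γ₁ γ₂) (h₂₃ : ConfLE γ₂ γ₃) :
    ConfLE γ₁ γ₃ :=
  ⟨h₁₂.1.trans h₂₃.1, h₁₂.2.1.trans h₂₃.2.1, h₁₂.2.2.trans h₂₃.2.2⟩

theorem confLE_add_of_subset {γ : Multiset Q × D} {σ : Multiset Q} (hσ : σ ⊆ γ.1) :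
    ConfLE γ (γ.1 + σ, γ.2) :=
  ⟨rfl, by simp only [Multiset.toFinset_add, Finset.left_eq_union, Multiset.toFinset_subset, hσ],
    Multiset.le_add_right _ _⟩

theorem ConfLE.tsub_subset {γ γ' : Multiset Q × D} (h : ConfLE γ γ') : γ'.1 - γ.1 ⊆ γ.1 :=
  fun q hq => by
    rw [← Multiset.mem_toFinset, h.2.1, Multiset.mem_toFinset]
    exact Multiset.mem_of_le tsub_le_self hq

theorem IsStep.add_idle {a b : Multiset Q × D} (h : IsStep T a b) (ν : Multiset Q) :
    IsStep T (a.1 + ν, a.2) (b.1 + ν, b.2) := by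
  obtain ⟨q, op, d, q', hT, hq, hb, hreg⟩ := h
  refine ⟨q, op, d, q', hT, Multiset.mem_add.mpr (Or.inl hq), ?_, hreg⟩
  change b.1 + ν = a.1 + ν - {q} + {q'}
  rw [hb, add_right_comm, tsub_add_eq_add_tsub (Multiset.singleton_le.mpr hq)]

theorem IsStep.repeat {b c : Multiset Q × D} (h : IsStep T b c) :
    ∃ q ∈ b.1, ∃ q', c.1 = b.1 - {q} + {q'} ∧ IsStep T (c.1 + {q}, c.2) (c.1 + {q'}, c.2) := by
  obtain ⟨q, op, d, q', hT, hq, hc, hreg⟩ := h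
  refine ⟨q, hq, q', hc, q, op, d, q', hT,
    Multiset.mem_add.mpr (.inr (Multiset.mem_singleton_self q)), ?_, ?_⟩
  · exact (congrArg (· + {q'}) (add_tsub_cancel_right c.1 {q})).symm
  · rcases hreg with ⟨hop, -, hd⟩ | ⟨hop, hd⟩
    · exact Or.inl ⟨hop, hd, hd⟩
    · exact Or.inr ⟨hop, hd⟩

theorem IsStep.exists_reach_add_singleton {b c : Multiset Q × D} (h : IsStep T b c)
    {q' : Q} (hq' : q' ∈ c.1) :
    ∃ q ∈ b.1, Reach T (b.1 + {q}, b.2) (c.1 + {q'}, c.2) := by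
  obtain ⟨q, hq, qn, hc, hrep⟩ := h.repeat
  rw [hc, Multiset.mem_add, Multiset.mem_singleton] at hq'
  rcases hq' with hq' | rfl
  · exact ⟨q', Multiset.mem_of_le tsub_le_self hq', .single (h.add_idle _)⟩
  · exact ⟨q, hq, .tail (.single (h.add_idle _)) hrep⟩

theorem Reach.exists_reach_add_singleton {a b : Multiset Q × D} (h : Reach T a b)
    {q' : Q} (hq' : q' ∈ b.1) :
    ∃ q ∈ a.1, Reach T (a.1 + {q}, a.2) (b.1 + {q'}, b.2) := by
  induction h generalizing q' with
  | refl => exact ⟨q', hq', .refl⟩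
  | tail _ hstep ih =>
    obtain ⟨q'', hq'', hlast⟩ := hstep.exists_reach_add_singleton hq'
    obtain ⟨q, hq, hfirst⟩ := ih hq''
    exact ⟨q, hq, hfirst.trans hlast⟩

theorem Reach.exists_reach_add {a b : Multiset Q × D} (h : Reach T a b) {ν : Multiset Q}
    (hν : ν ⊆ b.1) : ∃ σ ⊆ a.1, Reach T (a.1 + σ, a.2) (b.1 + ν, b.2) := by
  induction ν using Multiset.induction with
  | empty => exact ⟨0, Multiset.zero_subset _, by simpa using h⟩
  | cons q ν ih =>
    obtain ⟨σ, hσ, hr⟩ := ih (Multiset.Subset.trans (Multiset.subset_cons ν q) hν)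
    obtain ⟨p, hp, hr'⟩ :=
      hr.exists_reach_add_singleton (Multiset.mem_add.mpr (.inl (hν (Multiset.mem_cons_self q ν))))
    refine ⟨p ::ₘ σ, Multiset.cons_subset.mpr ⟨(Multiset.mem_add.mp hp).elim id (@hσ p), hσ⟩, ?_⟩
    simpa only [Multiset.add_cons, ← Multiset.singleton_add, add_comm {p}, add_comm {q},
      add_assoc] using hr'

theorem Reach.exists_confLE_reach {a b b' : Multiset Q × D} (h : Reach T a b)
    (hb : ConfLE b b') : ∃ a', ConfLE a a' ∧ Reach T a' b' := by
  obtain ⟨σ, hσ, hr⟩ := h.exists_reach_add hb.tsub_subset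
  refine ⟨_, confLE_add_of_subset hσ, ?_⟩
  rwa [add_tsub_cancel_of_le hb.2.2, hb.1] at hr

theorem mem_postStar_upSet_of_confLE {B : Set (Multiset Q × D)} {γ γ' : Multiset Q × D}
    (hγ : γ ∈ PostStar T (UpSet B)) (hle : ConfLE γ γ') : γ' ∈ PostStar T (UpSet B) := by
  obtain ⟨γ₀, ⟨β, hβ, hβγ₀⟩, hr⟩ := hγ
  obtain ⟨γ₀', hγ₀, hr'⟩ := hr.exists_confLE_reach hle
  exact ⟨γ₀', ⟨β, hβ, hβγ₀.trans hγ₀⟩, hr'⟩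

end Copycat

theorem stmt_4_general {Q D : Type*} [DecidableEq Q]
    (T : Set (Q × Op × D × Q))
    (q0 : Q) (d0 : D)
    (γ γ' : Multiset Q × D)
    (hγ : γ ∈ PostStar T (UpSet {(({q0} : Multiset Q), d0)}))
    (hle : ConfLE γ γ') :
    γ' ∈ PostStar T (UpSet {(({q0} : Multiset Q), d0)}) :=
  mem_postStar_upSet_of_confLE hγ hle

/-- `Post*(↑{⟨q0, d0⟩})` is upward-closed for `⪯`. -/
theorem stmt_4 {Q D : Type*} [DecidableEq Q]
    (T : Set (Q × Op × D × Q)) (hnb : Nonblock T) (hrt : ReadTotal T)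
    (q0 : Q) (d0 : D)
    (γ γ' : Multiset Q × D)
    (hγ : γ ∈ PostStar T (UpSet {(({q0} : Multiset Q), d0)}))
    (hle : ConfLE γ γ') :
    γ' ∈ PostStar T (UpSet {(({q0} : Multiset Q), d0)}) :=
  stmt_4_general T q0 d0 γ γ' hγ hle
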